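/- arXiv:math-ph/0410044 — 7 statements merged into one kernel-verified Lean document; each statement's English description precedes it below -/
import Mathlib

section
/- Let U ⊆ ℝⁿ be an open set and let f : ℝⁿ → ℝ be twice continuously differentiable on U with ∇f(x) ≠ 0 for all x ∈ U. Suppose the gradient lines of f are pre-geodesics, i.e., there is a function λ : U → ℝ such that for every x ∈ U the derivative of the gradient field satisfies D(∇f)(x)(∇f(x)) = λ(x) · ∇f(x). Then for every x ∈ U and every vector v with ⟨v, ∇f(x)⟩ = 0 the directional derivative of ‖∇f‖² at x in direction v vanishes; consequently ‖∇f‖² is constant on every connected component of every level set of f in U. -/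
open Set Metric

/-- The Laplacian of `f : ℝⁿ → ℝ` at `x`: the trace of the derivative of the gradient field
(equivalently, the trace of the second derivative). -/
noncomputable def laplacian {n : ℕ} (f : EuclideanSpace ℝ (Fin n) → ℝ)
    (x : EuclideanSpace ℝ (Fin n)) : ℝ :=
  LinearMap.trace ℝ (EuclideanSpace ℝ (Fin n))
    ((fderiv ℝ (gradient f) x :
        EuclideanSpace ℝ (Fin n) →L[ℝ] EuclideanSpace ℝ (Fin n)) :
      EuclideanSpace ℝ (Fin n) →ₗ[ℝ] EuclideanSpace ℝ (Fin n))

/-- `g` is constant on the connected component of each point `x ∈ S` in the level set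
`{y ∈ S | f y = f x}`. -/
def ConstOnFibreComponents {n : ℕ} (f g : EuclideanSpace ℝ (Fin n) → ℝ)
    (S : Set (EuclideanSpace ℝ (Fin n))) : Prop :=
  ∀ x ∈ S, ∀ y ∈ connectedComponentIn {z | z ∈ S ∧ f z = f x} x, g y = g x

section Auxiliary

open Topology RealInnerProductSpace

variable {n : ℕ}

lemma inner_grad (f : EuclideanSpace ℝ (Fin n) → ℝ) (x v : EuclideanSpace ℝ (Fin n)) :
    ⟪gradient f x, v⟫ = fderiv ℝ f x v :=
  InnerProductSpace.toDual_symm_apply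

lemma gradient_contDiffAt {f : EuclideanSpace ℝ (Fin n) → ℝ} {x : EuclideanSpace ℝ (Fin n)}
    (hf : ContDiffAt ℝ 2 f x) : ContDiffAt ℝ 1 (gradient f) x := by
  have h1 : ContDiffAt ℝ 1 (fderiv ℝ f) x := hf.fderiv_right (by norm_num)
  exact ((InnerProductSpace.toDual ℝ (EuclideanSpace ℝ (Fin n))).symm.contDiff.contDiffAt).comp x h1

lemma fderiv_gradient_apply {f : EuclideanSpace ℝ (Fin n) → ℝ} {x : EuclideanSpace ℝ (Fin n)}
    (hf : ContDiffAt ℝ 2 f x) (v w : EuclideanSpace ℝ (Fin n)) :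
    ⟪fderiv ℝ (gradient f) x v, w⟫ = fderiv ℝ (fderiv ℝ f) x v w := by
  have hG : DifferentiableAt ℝ (gradient f) x := (gradient_contDiffAt hf).differentiableAt one_ne_zero
  have hD : DifferentiableAt ℝ (fderiv ℝ f) x :=
    (hf.fderiv_right (m := 1) (by norm_num)).differentiableAt one_ne_zero
  have l1 : fderiv ℝ (fun y => ⟪gradient f y, w⟫) x v = ⟪fderiv ℝ (gradient f) x v, w⟫ := by
    rw [fderiv_inner_apply ℝ hG (differentiableAt_const w) v]
    simp
  have l2 : fderiv ℝ (fun y => ⟪gradient f y, w⟫) x v = fderiv ℝ (fderiv ℝ f) x v w := by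
    have he : (fun y => ⟪gradient f y, w⟫) =
        fun y => (ContinuousLinearMap.apply ℝ ℝ w) (fderiv ℝ f y) := by
      funext y; exact inner_grad f y w
    have hc := ((ContinuousLinearMap.apply ℝ ℝ w).hasFDerivAt.comp x hD.hasFDerivAt).fderiv
    rw [he]
    rw [show (fun y => (ContinuousLinearMap.apply ℝ ℝ w) (fderiv ℝ f y)) =
      (ContinuousLinearMap.apply ℝ ℝ w) ∘ (fderiv ℝ f) from rfl, hc]
    simp
  rw [← l1, l2]

lemma grad_symm {f : EuclideanSpace ℝ (Fin n) → ℝ} {x : EuclideanSpace ℝ (Fin n)}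
    (hf : ContDiffAt ℝ 2 f x) (v w : EuclideanSpace ℝ (Fin n)) :
    ⟪fderiv ℝ (gradient f) x v, w⟫ = ⟪fderiv ℝ (gradient f) x w, v⟫ := by
  rw [fderiv_gradient_apply hf, fderiv_gradient_apply hf, (hf.isSymmSndFDerivAt (by simp)) v w]

lemma part1 {U : Set (EuclideanSpace ℝ (Fin n))} (hU : IsOpen U)
    {f : EuclideanSpace ℝ (Fin n) → ℝ} (hf : ContDiffOn ℝ 2 f U)
    {lam : EuclideanSpace ℝ (Fin n) → ℝ}
    (hgeo : ∀ x ∈ U, fderiv ℝ (gradient f) x (gradient f x) = lam x • gradient f x)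
    {x : EuclideanSpace ℝ (Fin n)} (hx : x ∈ U) :
    DifferentiableAt ℝ (fun y => ‖gradient f y‖ ^ 2) x ∧
    ∀ v, ⟪v, gradient f x⟫ = 0 → fderiv ℝ (fun y => ‖gradient f y‖ ^ 2) x v = 0 := by
  have hfx : ContDiffAt ℝ 2 f x := hf.contDiffAt (hU.mem_nhds hx)
  have hG : DifferentiableAt ℝ (gradient f) x := (gradient_contDiffAt hfx).differentiableAt one_ne_zero
  have heq : (fun y => ‖gradient f y‖ ^ 2) = fun y => ⟪gradient f y, gradient f y⟫ := by
    funext y; rw [real_inner_self_eq_norm_sq]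
  constructor
  · rw [heq]; exact hG.inner ℝ hG
  · intro v hv
    have hkey : ⟪fderiv ℝ (gradient f) x v, gradient f x⟫ = 0 := by
      rw [grad_symm hfx, hgeo x hx, real_inner_smul_left, real_inner_comm, hv, mul_zero]
    rw [heq, fderiv_inner_apply ℝ hG hG v, hkey, real_inner_comm, hkey, add_zero]

lemma local_const {U : Set (EuclideanSpace ℝ (Fin n))} (hU : IsOpen U)
    {f : EuclideanSpace ℝ (Fin n) → ℝ} (hf : ContDiffOn ℝ 2 f U)
    (hgrad : ∀ x ∈ U, gradient f x ≠ 0)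
    {lam : EuclideanSpace ℝ (Fin n) → ℝ}
    (hgeo : ∀ x ∈ U, fderiv ℝ (gradient f) x (gradient f x) = lam x • gradient f x)
    {q : EuclideanSpace ℝ (Fin n)} (hq : q ∈ U) :
    ∀ᶠ y in 𝓝 q, (y ∈ U ∧ f y = f q) → ‖gradient f y‖ ^ 2 = ‖gradient f q‖ ^ 2 := by
  classical
  have hfq : ContDiffAt ℝ 2 f q := hf.contDiffAt (hU.mem_nhds hq)
  set a := gradient f q with ha_def
  have ha : a ≠ 0 := hgrad q hq
  set u : EuclideanSpace ℝ (Fin n) := (‖a‖ ^ 2)⁻¹ • a with hu_def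
  have hau : ⟪a, u⟫ = 1 := by
    rw [hu_def, real_inner_smul_right, real_inner_self_eq_norm_sq]
    exact inv_mul_cancel₀ (pow_ne_zero 2 (norm_ne_zero_iff.mpr ha))
  set Φ : EuclideanSpace ℝ (Fin n) → EuclideanSpace ℝ (Fin n) :=
    fun y => y + (f y - f q - ⟪a, y - q⟫) • u with hΦ_def
  have hkey : ∀ y, ⟪a, Φ y - q⟫ = f y - f q := by
    intro y
    have h1 : Φ y - q = (y - q) + (f y - f q - ⟪a, y - q⟫) • u := by
      rw [hΦ_def]; exact add_sub_right_comm y _ q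
    rw [h1, inner_add_right, real_inner_smul_right, hau, mul_one]; ring
  have hΦq : Φ q = q := by simp [hΦ_def]
  have hfd : DifferentiableAt ℝ f q := hfq.differentiableAt (by norm_num)
  have hc0 : HasFDerivAt (fun y => f y - f q - ⟪a, y - q⟫)
      (0 : EuclideanSpace ℝ (Fin n) →L[ℝ] ℝ) q := by
    have h2 : HasFDerivAt (fun y : EuclideanSpace ℝ (Fin n) => ⟪a, y - q⟫) (innerSL ℝ a) q := by
      have := (innerSL ℝ a).hasFDerivAt.comp q ((hasFDerivAt_id q).sub_const q)
      exact this
    have h1 : HasFDerivAt (fun y => f y - f q) (fderiv ℝ f q) q := hfd.hasFDerivAt.sub_const _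
    have h3 := h1.sub h2
    have heq0 : fderiv ℝ f q - innerSL ℝ a = 0 := by
      ext w
      have h := inner_grad f q w
      simp only [ContinuousLinearMap.sub_apply, ContinuousLinearMap.zero_apply, innerSL_apply_apply]
      rw [← h, ← ha_def, sub_self]
    rwa [heq0] at h3
  have hΦ' : HasFDerivAt Φ
      (↑(ContinuousLinearEquiv.refl ℝ (EuclideanSpace ℝ (Fin n))) :
        EuclideanSpace ℝ (Fin n) →L[ℝ] EuclideanSpace ℝ (Fin n)) q := by
    have h4 : HasFDerivAt (fun y => (f y - f q - ⟪a, y - q⟫) • u)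
        (0 : EuclideanSpace ℝ (Fin n) →L[ℝ] EuclideanSpace ℝ (Fin n)) q := by
      have h5 := hc0.smul_const u
      have h6 : ContinuousLinearMap.smulRight (0 : EuclideanSpace ℝ (Fin n) →L[ℝ] ℝ) u = 0 := by
        ext w; simp
      rwa [h6] at h5
    have h5 := (hasFDerivAt_id q).add h4
    rw [add_zero] at h5; exact h5
  have hΦC : ContDiffAt ℝ 1 Φ q := by
    have hinner : ContDiff ℝ 1 (fun y : EuclideanSpace ℝ (Fin n) => ⟪a, y - q⟫) :=
      (innerSL ℝ a).contDiff.comp (contDiff_id.sub contDiff_const)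
    exact (contDiff_id.contDiffAt).add
      ((((hfq.of_le one_le_two).sub contDiffAt_const).sub hinner.contDiffAt).smul
        contDiffAt_const)
  set Ψ := hΦC.localInverse hΦ' one_ne_zero with hΨ_def
  have hS : HasStrictFDerivAt Φ
      (↑(ContinuousLinearEquiv.refl ℝ (EuclideanSpace ℝ (Fin n)))) q :=
    hΦC.hasStrictFDerivAt' hΦ' one_ne_zero
  have hΨq : Ψ q = q := by
    have := hΦC.localInverse_apply_image hΦ' one_ne_zero; rwa [hΦq] at this
  have hΨC : ContDiffAt ℝ 1 Ψ q := by
    have := hΦC.to_localInverse hΦ' one_ne_zero; rwa [hΦq] at this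
  have hEvR : ∀ᶠ z in 𝓝 q, Φ (Ψ z) = z := by
    have h := hS.eventually_right_inverse; rw [hΦq] at h; exact h
  have hEvL : ∀ᶠ y in 𝓝 q, Ψ (Φ y) = y := hS.eventually_left_inverse
  have hΨU : ∀ᶠ z in 𝓝 q, Ψ z ∈ U := by
    have hcont : ContinuousAt Ψ q := by
      have := hS.localInverse_continuousAt; rwa [hΦq] at this
    exact hcont.eventually_mem (by rw [hΨq]; exact hU.mem_nhds hq)
  have hΨd : ∀ᶠ z in 𝓝 q, DifferentiableAt ℝ Ψ z := by
    obtain ⟨t, ht, hts⟩ := hΨC.contDiffOn le_rfl (by simp)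
    filter_upwards [interior_mem_nhds.mpr ht] with z hz
    exact ((hts.mono interior_subset).differentiableOn one_ne_zero).differentiableAt
      (isOpen_interior.mem_nhds hz)
  obtain ⟨ε, hε, hball⟩ := Metric.eventually_nhds_iff_ball.mp ((hEvR.and hΨd).and hΨU)
  have hΦball : ∀ᶠ y in 𝓝 q, Φ y ∈ ball q ε := by
    apply hΦC.continuousAt.eventually_mem
    rw [hΦq]; exact ball_mem_nhds q hε
  filter_upwards [hEvL, hΦball] with y hy1 hy2
  rintro ⟨hyU, hyf⟩
  set z := Φ y with hz_def
  have hz0 : ⟪a, z - q⟫ = 0 := by rw [hz_def, hkey y, hyf, sub_self]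
  set γ : ℝ → EuclideanSpace ℝ (Fin n) := fun s => Ψ (q + s • (z - q)) with hγ_def
  have hσmem : ∀ s ∈ Icc (0:ℝ) 1, q + s • (z - q) ∈ ball q ε := by
    intro s hs
    rw [mem_ball, dist_eq_norm, add_sub_cancel_left, norm_smul]
    have hzε : ‖z - q‖ < ε := by rwa [mem_ball, dist_eq_norm] at hy2
    calc ‖s‖ * ‖z - q‖ ≤ 1 * ‖z - q‖ := by
          apply mul_le_mul_of_nonneg_right _ (norm_nonneg _)
          rw [Real.norm_eq_abs, abs_le]; exact ⟨by linarith [hs.1], hs.2⟩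
      _ < ε := by rwa [one_mul]
  have hfγ : ∀ s : ℝ, q + s • (z - q) ∈ ball q ε → f (γ s) = f q := by
    intro s hs
    have h1 := (hball _ hs).1.1
    have h2 := hkey (γ s)
    rw [show Φ (γ s) = q + s • (z - q) from h1] at h2
    have h3 : ⟪a, q + s • (z - q) - q⟫ = 0 := by
      rw [add_sub_cancel_left, real_inner_smul_right, hz0, mul_zero]
    rw [h3] at h2
    linarith [h2]
  have hderiv : ∀ s ∈ Icc (0:ℝ) 1, HasDerivAt (fun t => ‖gradient f (γ t)‖ ^ 2) 0 s := by
    intro s hs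
    have hmem := hσmem s hs
    obtain ⟨⟨hr, hd⟩, hUmem⟩ := hball _ hmem
    have hσ' : HasDerivAt (fun t : ℝ => q + t • (z - q)) (z - q) s := by
      simpa using ((hasDerivAt_id s).smul_const (z - q)).const_add q
    set v := fderiv ℝ Ψ (q + s • (z - q)) (z - q) with hv_def
    have hγ' : HasDerivAt γ v s := hd.hasFDerivAt.comp_hasDerivAt s hσ'
    have hσcont : Continuous (fun t : ℝ => q + t • (z - q)) :=
      continuous_const.add (continuous_id.smul continuous_const)
    have hev : ∀ᶠ t in 𝓝 s, q + t • (z - q) ∈ ball q ε :=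
      hσcont.continuousAt.eventually_mem (isOpen_ball.mem_nhds hmem)
    have hfconst : HasDerivAt (fun t => f (γ t)) 0 s := by
      have heq : (fun t => f (γ t)) =ᶠ[𝓝 s] fun _ => f q :=
        hev.mono fun t ht => hfγ t ht
      exact (hasDerivAt_const s (f q)).congr_of_eventuallyEq heq
    have hfdiff : DifferentiableAt ℝ f (γ s) :=
      (hf.contDiffAt (hU.mem_nhds hUmem)).differentiableAt (by norm_num)
    have hchain : HasDerivAt (fun t => f (γ t)) (fderiv ℝ f (γ s) v) s :=
      hfdiff.hasFDerivAt.comp_hasDerivAt s hγ'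
    have h0 : fderiv ℝ f (γ s) v = 0 := hchain.unique hfconst
    have hperp : ⟪v, gradient f (γ s)⟫ = 0 := by
      rw [real_inner_comm, inner_grad, h0]
    obtain ⟨hgd, hgz⟩ := part1 hU hf hgeo hUmem
    have hfin := hgd.hasFDerivAt.comp_hasDerivAt s hγ'
    rwa [hgz v hperp] at hfin
  have hcont : ContinuousOn (fun t => ‖gradient f (γ t)‖ ^ 2) (Icc (0:ℝ) 1) :=
    fun s hs => ((hderiv s hs).continuousAt).continuousWithinAt
  have hfinal := constant_of_has_deriv_right_zero hcont
    (fun s hs => ((hderiv s (Ico_subset_Icc_self hs)).hasDerivWithinAt)) 1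
    (right_mem_Icc.mpr zero_le_one)
  have hγ1 : γ 1 = y := by
    rw [hγ_def]
    simp only [one_smul, add_sub_cancel]
    exact hy1
  have hγ0 : γ 0 = q := by
    rw [hγ_def]; simp [hΨq]
  calc ‖gradient f y‖ ^ 2 = ‖gradient f (γ 1)‖ ^ 2 := by rw [hγ1]
    _ = ‖gradient f (γ 0)‖ ^ 2 := hfinal
    _ = ‖gradient f q‖ ^ 2 := by rw [hγ0]

end Auxiliary

set_option maxHeartbeats 1000000 in
open RealInnerProductSpace in
/-- Euclidean core of the proof of Proposition 2.3: if the gradient lines of `f` are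
pre-geodesics, then `‖∇f‖²` has vanishing derivative in directions tangent to the level sets,
and hence is constant on the connected components of the level sets of `f`. -/
theorem statement4 {n : ℕ} (U : Set (EuclideanSpace ℝ (Fin n))) (hU : IsOpen U)
    (f : EuclideanSpace ℝ (Fin n) → ℝ) (hf : ContDiffOn ℝ 2 f U)
    (hgrad : ∀ x ∈ U, gradient f x ≠ 0)
    (lam : EuclideanSpace ℝ (Fin n) → ℝ)
    (hgeo : ∀ x ∈ U, fderiv ℝ (gradient f) x (gradient f x) = lam x • gradient f x) :
    (∀ x ∈ U, ∀ v : EuclideanSpace ℝ (Fin n), ⟪v, gradient f x⟫ = 0 →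
      fderiv ℝ (fun y => ‖gradient f y‖ ^ 2) x v = 0) ∧
    ConstOnFibreComponents f (fun y => ‖gradient f y‖ ^ 2) U := by
  constructor
  · intro x hx v hv
    exact (part1 hU hf hgeo hx).2 v hv
  · intro x hx y hy
    have hxL : x ∈ {z | z ∈ U ∧ f z = f x} := ⟨hx, rfl⟩
    rw [connectedComponentIn_eq_image hxL] at hy
    obtain ⟨p, hp, rfl⟩ := hy
    have hGlc : IsLocallyConstant
        (fun r : {z | z ∈ U ∧ f z = f x} => ‖gradient f (r : EuclideanSpace ℝ (Fin n))‖ ^ 2) := by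
      rw [IsLocallyConstant.iff_exists_open]
      intro r
      obtain ⟨hrU, hrf⟩ := r.2
      obtain ⟨t, htp, ht_open, ht_mem⟩ :=
        _root_.eventually_nhds_iff.mp (local_const hU hf hgrad hgeo hrU)
      refine ⟨Subtype.val ⁻¹' t, ht_open.preimage continuous_subtype_val, ht_mem, ?_⟩
      intro s hs
      obtain ⟨hsU, hsf⟩ := s.2
      exact htp _ hs ⟨hsU, by rw [hsf, hrf]⟩
    have hres := hGlc.apply_eq_of_isPreconnected
      (isPreconnected_connectedComponent (x := ⟨x, hxL⟩)) hp mem_connectedComponent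
    simpa using hres
end

section
/- Let U ⊆ ℝⁿ be an open set and let f : ℝⁿ → ℝ be twice continuously differentiable on U with ∇f(x) ≠ 0 for all x ∈ U. Suppose there are a continuously differentiable function F : ℝ → ℝ with F > 0 and a function H : ℝ → ℝ such that ‖∇f(x)‖² = F(f(x)) and the mean curvature of the level sets satisfies div(∇f/‖∇f‖)(x) = H(f(x)) for all x ∈ U. Then Δf(x) = G(f(x)) for all x ∈ U, where G(t) = H(t)·√(F(t)) + F'(t)/2. -/
open Set Metric

/-- The divergence of a vector field `V : ℝⁿ → ℝⁿ` at `x`: the trace of its Fréchet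
derivative at `x`. -/
noncomputable def divergence {n : ℕ}
    (V : EuclideanSpace ℝ (Fin n) → EuclideanSpace ℝ (Fin n))
    (x : EuclideanSpace ℝ (Fin n)) : ℝ :=
  LinearMap.trace ℝ (EuclideanSpace ℝ (Fin n))
    ((fderiv ℝ V x :
        EuclideanSpace ℝ (Fin n) →L[ℝ] EuclideanSpace ℝ (Fin n)) :
      EuclideanSpace ℝ (Fin n) →ₗ[ℝ] EuclideanSpace ℝ (Fin n))

private lemma trace_smulRight' {n : ℕ} (φ : EuclideanSpace ℝ (Fin n) →L[ℝ] ℝ)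
    (v : EuclideanSpace ℝ (Fin n)) :
    LinearMap.trace ℝ _ ((φ.smulRight v : EuclideanSpace ℝ (Fin n) →L[ℝ] _) :
      EuclideanSpace ℝ (Fin n) →ₗ[ℝ] EuclideanSpace ℝ (Fin n)) = φ v := by
  have h : ((φ.smulRight v : EuclideanSpace ℝ (Fin n) →L[ℝ] _) :
      EuclideanSpace ℝ (Fin n) →ₗ[ℝ] EuclideanSpace ℝ (Fin n))
      = dualTensorHom ℝ _ _ ((φ : EuclideanSpace ℝ (Fin n) →ₗ[ℝ] ℝ) ⊗ₜ v) := by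
    ext u; simp
  rw [h, LinearMap.trace_eq_contract_apply, contractLeft_apply]; rfl


/-- Euclidean content of Proposition 2.3: if `‖∇f‖² = F(f)` and the level sets have mean
curvature `div(∇f/‖∇f‖) = H(f)`, then `Δf = G(f)` with `G = H·√F + F'/2`. -/
theorem statement5 {n : ℕ} (U : Set (EuclideanSpace ℝ (Fin n))) (hU : IsOpen U)
    (f : EuclideanSpace ℝ (Fin n) → ℝ) (hf : ContDiffOn ℝ 2 f U)
    (hgrad : ∀ x ∈ U, gradient f x ≠ 0)
    (F : ℝ → ℝ) (hF : ContDiff ℝ 1 F) (hFpos : ∀ t, 0 < F t)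
    (H : ℝ → ℝ)
    (hF2 : ∀ x ∈ U, ‖gradient f x‖ ^ 2 = F (f x))
    (hH : ∀ x ∈ U,
      divergence (fun y => ‖gradient f y‖⁻¹ • gradient f y) x = H (f x)) :
    ∀ x ∈ U, laplacian f x = H (f x) * Real.sqrt (F (f x)) + deriv F (f x) / 2 := by
  intro x hx
  have hxU : U ∈ nhds x := hU.mem_nhds hx
  have hf2 : ContDiffAt ℝ 2 f x := hf.contDiffAt hxU
  have hfd1 : DifferentiableAt ℝ (fderiv ℝ f) x :=
    (hf2.fderiv_right (by norm_num : (1:WithTop ℕ∞)+1 ≤ 2)).differentiableAt one_ne_zero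
  have hgradd : DifferentiableAt ℝ (gradient f) x := by
    have h : gradient f = fun y => (InnerProductSpace.toDual ℝ (EuclideanSpace ℝ (Fin n))).symm (fderiv ℝ f y) := rfl
    rw [h]
    exact ((InnerProductSpace.toDual ℝ (EuclideanSpace ℝ (Fin n))).symm.toContinuousLinearEquiv.toContinuousLinearMap.differentiableAt).comp x hfd1
  have hgx0 : ‖gradient f x‖ ≠ 0 := norm_ne_zero_iff.mpr (hgrad x hx)
  have hsqF : Real.sqrt (F (f x)) = ‖gradient f x‖ := by
    rw [← hF2 x hx]; exact Real.sqrt_sq (norm_nonneg _)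
  have hsqFpos : 0 < Real.sqrt (F (f x)) := Real.sqrt_pos.mpr (hFpos _)
  -- derivative of g = ‖gradient f‖
  have hfdf : HasFDerivAt f (fderiv ℝ f x) x := (hf2.differentiableAt (by norm_num)).hasFDerivAt
  have hFd : HasDerivAt F (deriv F (f x)) (f x) := ((hF.differentiable one_ne_zero) (f x)).hasDerivAt
  have hsq : HasDerivAt Real.sqrt (1 / (2 * Real.sqrt (F (f x)))) (F (f x)) :=
    Real.hasDerivAt_sqrt (hFpos _).ne'
  have hcomp1 : HasFDerivAt (F ∘ f) (deriv F (f x) • fderiv ℝ f x) x :=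
    hFd.comp_hasFDerivAt x hfdf
  have hcomp2 : HasFDerivAt (fun y => Real.sqrt (F (f y)))
      ((1 / (2 * Real.sqrt (F (f x)))) • (deriv F (f x) • fderiv ℝ f x)) x :=
    hsq.comp_hasFDerivAt x hcomp1
  have hEv : (fun y => ‖gradient f y‖) =ᶠ[nhds x] fun y => Real.sqrt (F (f y)) := by
    filter_upwards [hxU] with y hy
    rw [← hF2 y hy]; exact (Real.sqrt_sq (norm_nonneg _)).symm
  have hg : HasFDerivAt (fun y => ‖gradient f y‖)
      ((1 / (2 * Real.sqrt (F (f x)))) • (deriv F (f x) • fderiv ℝ f x)) x :=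
    hcomp2.congr_of_eventuallyEq hEv
  set N : EuclideanSpace ℝ (Fin n) → EuclideanSpace ℝ (Fin n) := fun y => ‖gradient f y‖⁻¹ • gradient f y with hNdef
  have hN : DifferentiableAt ℝ N x := (hg.differentiableAt.inv hgx0).smul hgradd
  have hEq : gradient f =ᶠ[nhds x] fun y => ‖gradient f y‖ • N y := by
    filter_upwards [hxU] with y hy
    rw [hNdef]
    exact (smul_inv_smul₀ (norm_ne_zero_iff.mpr (hgrad y hy)) _).symm
  have hfsmul : fderiv ℝ (gradient f) x = fderiv ℝ (fun y => ‖gradient f y‖ • N y) x :=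
    hEq.fderiv_eq
  have hfs : fderiv ℝ (fun y => ‖gradient f y‖ • N y) x
      = ‖gradient f x‖ • fderiv ℝ N x
        + (fderiv ℝ (fun y => ‖gradient f y‖) x).smulRight (N x) :=
    fderiv_smul hg.differentiableAt hN
  have hinner : ∀ v : EuclideanSpace ℝ (Fin n), fderiv ℝ f x v = inner ℝ (gradient f x) v := by
    intro v
    exact (InnerProductSpace.toDual_symm_apply).symm
  have hφN : fderiv ℝ (fun y => ‖gradient f y‖) x (N x) = deriv F (f x) / 2 := by
    rw [hg.fderiv]
    simp only [ContinuousLinearMap.coe_smul', Pi.smul_apply, smul_eq_mul]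
    rw [hinner (N x), hNdef]
    simp only [real_inner_smul_right]
    rw [real_inner_self_eq_norm_sq]
    rw [← hsqF]
    field_simp
  have htr : laplacian f x
      = ‖gradient f x‖ * divergence N x
        + fderiv ℝ (fun y => ‖gradient f y‖) x (N x) := by
    rw [laplacian, hfsmul, hfs]
    push_cast
    rw [map_add]
    congr 1
    · rw [map_smul, divergence, smul_eq_mul]
    · exact trace_smulRight' _ _
  rw [htr, hH x hx, hφN, ← hsqF]
  ring
end

section
/- Let Ω ⊆ ℝⁿ be a connected open set and let f : ℝⁿ → ℝ be real-analytic on Ω such that ‖∇f‖² and Δf are constant on every connected component of every level set of f in Ω. Let x₀ ∈ Ω satisfy ∇f(x₀) ≠ 0. Then there exist an open neighborhood V ⊆ Ω of x₀ and functions F, G : ℝ → ℝ such that ‖∇f(x)‖² = F(f(x)) and Δf(x) = G(f(x)) for all x ∈ V, i.e., f is isoparametric on V. -/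
open Set Metric

/-- Euclidean case of Theorem 2.5: an equilibrium function is locally isoparametric around
any regular point. -/
theorem statement6 {n : ℕ} (Ω : Set (EuclideanSpace ℝ (Fin n)))
    (hΩo : IsOpen Ω) (hΩc : IsConnected Ω)
    (f : EuclideanSpace ℝ (Fin n) → ℝ) (hf : AnalyticOnNhd ℝ f Ω)
    (heq1 : ConstOnFibreComponents f (fun x => ‖gradient f x‖ ^ 2) Ω)
    (heq2 : ConstOnFibreComponents f (laplacian f) Ω)
    (x₀ : EuclideanSpace ℝ (Fin n)) (hx₀ : x₀ ∈ Ω)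
    (hgrad : gradient f x₀ ≠ 0) :
    ∃ (V : Set (EuclideanSpace ℝ (Fin n))) (F G : ℝ → ℝ),
      IsOpen V ∧ x₀ ∈ V ∧ V ⊆ Ω ∧
      (∀ x ∈ V, ‖gradient f x‖ ^ 2 = F (f x)) ∧
      (∀ x ∈ V, laplacian f x = G (f x)) := by
  classical
  set f' : EuclideanSpace ℝ (Fin n) →L[ℝ] ℝ := fderiv ℝ f x₀ with hf'def
  have hst : HasStrictFDerivAt f f' x₀ := (hf x₀ hx₀).hasStrictFDerivAt
  have hsurj : LinearMap.range (f' : EuclideanSpace ℝ (Fin n) →ₗ[ℝ] ℝ) = ⊤ := by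
    have h1 : f' ≠ 0 := by
      intro h0
      apply hgrad
      rw [gradient]
      rw [show fderiv ℝ f x₀ = 0 from h0]
      simp
    rw [LinearMap.range_eq_top]
    intro t
    obtain ⟨v, hv⟩ : ∃ v, f' v ≠ 0 := by
      by_contra hc
      push_neg at hc
      exact h1 (ContinuousLinearMap.ext fun v => hc v)
    exact ⟨(t / f' v) • v, by simp [div_mul_cancel₀, hv]⟩
  set φ := HasStrictFDerivAt.implicitToOpenPartialHomeomorph f f' hst hsurj with hφdef
  have hφfst : ∀ x : EuclideanSpace ℝ (Fin n), (φ x).1 = f x := fun x =>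
    HasStrictFDerivAt.implicitToOpenPartialHomeomorph_fst (hf := hst) hsurj x
  have hx₀src : x₀ ∈ φ.source := HasStrictFDerivAt.mem_implicitToOpenPartialHomeomorph_source (hf := hst) hsurj
  -- open set O in the target whose symm-image lies in Ω
  have hO : IsOpen (φ.target ∩ φ.symm ⁻¹' (Ω ∩ φ.source)) :=
    φ.isOpen_inter_preimage_symm (hΩo.inter φ.open_source)
  have hφx₀O : φ x₀ ∈ φ.target ∩ φ.symm ⁻¹' (Ω ∩ φ.source) := by
    refine ⟨φ.map_source hx₀src, ?_⟩
    rw [mem_preimage, φ.left_inv hx₀src]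
    exact ⟨hx₀, hx₀src⟩
  obtain ⟨r, hr, hball⟩ := (Metric.isOpen_iff.1 hO) _ hφx₀O
  set V : Set (EuclideanSpace ℝ (Fin n)) := φ.source ∩ φ ⁻¹' (ball (φ x₀) r) with hVdef
  have hVopen : IsOpen V := φ.isOpen_inter_preimage isOpen_ball
  have hx₀V : x₀ ∈ V := ⟨hx₀src, by simp [mem_ball, hr]⟩
  have hVΩ : V ⊆ Ω := by
    rintro x ⟨hxs, hxb⟩
    have := hball hxb
    rw [mem_inter_iff, mem_preimage, φ.left_inv hxs] at this
    exact this.2.1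
  -- key connectivity claim
  have key : ∀ x ∈ V, ∀ y ∈ V, f y = f x →
      y ∈ connectedComponentIn {z | z ∈ Ω ∧ f z = f x} x := by
    intro x hx y hy hfyx
    set S : Set (ℝ × ↥(LinearMap.ker (f' : EuclideanSpace ℝ (Fin n) →ₗ[ℝ] ℝ))) := {f x} ×ˢ ball (φ x₀).2 r with hSdef
    have hSsub : S ⊆ ball (φ x₀) r := by
      rintro ⟨t, k⟩ ⟨ht, hk⟩
      have ht' : t = f x := ht
      rw [mem_ball, Prod.dist_eq]
      refine max_lt ?_ hk
      have hle : dist (φ x).1 (φ x₀).1 ≤ dist (φ x) (φ x₀) := by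
        rw [Prod.dist_eq]; exact le_max_left _ _
      calc dist t (φ x₀).1 = dist (φ x).1 (φ x₀).1 := by rw [ht', ← hφfst x]
        _ ≤ dist (φ x) (φ x₀) := hle
        _ < r := hx.2
    have hStarget : S ⊆ φ.target := fun p hp => (hball (hSsub hp)).1
    have hSconn : IsPreconnected S :=
      ((convex_singleton (f x)).prod (convex_ball _ _)).isPreconnected
    set C : Set (EuclideanSpace ℝ (Fin n)) := φ.symm '' S with hCdef
    have hCconn : IsPreconnected C :=
      hSconn.image _ (φ.continuousOn_symm.mono hStarget)
    have hCsub : C ⊆ {z | z ∈ Ω ∧ f z = f x} := by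
      rintro z ⟨p, hp, rfl⟩
      have hmem := hball (hSsub hp)
      rw [mem_inter_iff, mem_preimage] at hmem
      refine ⟨hmem.2.1, ?_⟩
      rw [← hφfst, φ.right_inv (hStarget hp)]
      exact hp.1
    have memC : ∀ w ∈ V, f w = f x → w ∈ C := by
      intro w hw hfw
      refine ⟨φ w, ⟨?_, ?_⟩, φ.left_inv hw.1⟩
      · rw [mem_singleton_iff, hφfst, hfw]
      · have : dist (φ w).2 (φ x₀).2 ≤ dist (φ w) (φ x₀) := by
          rw [Prod.dist_eq]; exact le_max_right _ _
        exact lt_of_le_of_lt this hw.2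
    exact hCconn.subset_connectedComponentIn (memC x hx rfl) hCsub (memC y hy hfyx)
  -- define F and G by choice
  refine ⟨V, fun t => if h : ∃ x, x ∈ V ∧ f x = t then ‖gradient f h.choose‖ ^ 2 else 0,
    fun t => if h : ∃ x, x ∈ V ∧ f x = t then laplacian f h.choose else 0,
    hVopen, hx₀V, hVΩ, ?_, ?_⟩
  · intro x hx
    have h : ∃ y, y ∈ V ∧ f y = f x := ⟨x, hx, rfl⟩
    dsimp only
    rw [dif_pos h]
    exact heq1 h.choose (hVΩ h.choose_spec.1) x
      (key h.choose h.choose_spec.1 x hx h.choose_spec.2.symm)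
  · intro x hx
    have h : ∃ y, y ∈ V ∧ f y = f x := ⟨x, hx, rfl⟩
    dsimp only
    rw [dif_pos h]
    exact heq2 h.choose (hVΩ h.choose_spec.1) x
      (key h.choose h.choose_spec.1 x hx h.choose_spec.2.symm)
end

section
/- Let f : ℝ² → ℝ be defined by f(x) = cos(‖x‖) and fix a natural number i ≥ 0. Then for every x ∈ ℝ² with iπ < ‖x‖ < (i+1)π, the Laplacian satisfies Δf(x) = −f(x) − (−1)^i · √(1 − f(x)²) / (iπ + arccos((−1)^i · f(x))). -/
open Set Metric
open scoped RealInnerProductSpace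

section aux
variable {E : Type*} [NormedAddCommGroup E] [InnerProductSpace ℝ E]

lemma aux_hq (y : E) : HasFDerivAt (fun z : E => ⟪z, z⟫) ((2:ℝ) • innerSL ℝ y) y := by
  have h := (hasFDerivAt_id y).inner ℝ (hasFDerivAt_id y)
  refine h.congr_fderiv ?_
  ext v
  simp [fderivInnerCLM_apply, real_inner_comm]
  ring

lemma aux_grad [CompleteSpace E] {y : E} (hy : y ≠ 0) :
    HasGradientAt (fun z : E => Real.cos ‖z‖) ((-Real.sin ‖y‖ / ‖y‖) • y) y := by
  have hr : 0 < ‖y‖ := norm_pos_iff.mpr hy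
  have hqy : ⟪y, y⟫ = ‖y‖ ^ 2 := real_inner_self_eq_norm_sq y
  have hs0 : ⟪y, y⟫ ≠ 0 := by rw [hqy]; positivity
  have hsq : Real.sqrt ⟪y, y⟫ = ‖y‖ := by rw [hqy, Real.sqrt_sq (norm_nonneg y)]
  have hφ : HasDerivAt (fun s => Real.cos (Real.sqrt s))
      (-Real.sin ‖y‖ * (1 / (2 * ‖y‖))) ⟪y, y⟫ := by
    have h := (Real.hasDerivAt_cos (Real.sqrt ⟪y, y⟫)).comp _ (Real.hasDerivAt_sqrt hs0)
    simpa [hsq, Function.comp_def] using h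
  have hf : HasFDerivAt (fun z : E => Real.cos ‖z‖)
      ((-Real.sin ‖y‖ * (1 / (2 * ‖y‖))) • ((2:ℝ) • innerSL ℝ y)) y := by
    have h : HasFDerivAt (fun z : E => Real.cos (Real.sqrt ⟪z, z⟫))
        ((-Real.sin ‖y‖ * (1 / (2 * ‖y‖))) • ((2:ℝ) • innerSL ℝ y)) y :=
      HasDerivAt.comp_hasFDerivAt (f := fun z : E => ⟪z, z⟫) y hφ (aux_hq y)
    have hfun : (fun z : E => Real.cos ‖z‖)
        = fun z : E => Real.cos (Real.sqrt ⟪z, z⟫) := by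
      funext z
      rw [real_inner_self_eq_norm_sq, Real.sqrt_sq (norm_nonneg z)]
    rw [hfun]
    exact h
  rw [hasGradientAt_iff_hasFDerivAt]
  refine hf.congr_fderiv ?_
  ext v
  simp [InnerProductSpace.toDual_apply_apply, real_inner_smul_left]
  field_simp

lemma aux_c {x : E} (hx : x ≠ 0) :
    HasFDerivAt (fun z : E => -Real.sin ‖z‖ / ‖z‖)
      ((((-Real.cos ‖x‖ * (1 / (2 * ‖x‖))) * ‖x‖ - -Real.sin ‖x‖ * (1 / (2 * ‖x‖))) / ‖x‖ ^ 2)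
        • ((2:ℝ) • innerSL ℝ x)) x := by
  have hr : 0 < ‖x‖ := norm_pos_iff.mpr hx
  have hqx : ⟪x, x⟫ = ‖x‖ ^ 2 := real_inner_self_eq_norm_sq x
  have hs0 : ⟪x, x⟫ ≠ 0 := by rw [hqx]; positivity
  have hsq : Real.sqrt ⟪x, x⟫ = ‖x‖ := by rw [hqx, Real.sqrt_sq (norm_nonneg x)]
  have hu : HasDerivAt (fun s : ℝ => -Real.sin (Real.sqrt s))
      (-Real.cos ‖x‖ * (1 / (2 * ‖x‖))) ⟪x, x⟫ := by
    have h := ((Real.hasDerivAt_sin (Real.sqrt ⟪x, x⟫)).neg).comp _ (Real.hasDerivAt_sqrt hs0)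
    simpa [hsq, Function.comp_def] using h
  have hv : HasDerivAt Real.sqrt (1 / (2 * ‖x‖)) ⟪x, x⟫ := by
    simpa [hsq] using Real.hasDerivAt_sqrt hs0
  have hψ : HasDerivAt (fun s : ℝ => -Real.sin (Real.sqrt s) / Real.sqrt s)
      (((-Real.cos ‖x‖ * (1 / (2 * ‖x‖))) * ‖x‖ - -Real.sin ‖x‖ * (1 / (2 * ‖x‖))) / ‖x‖ ^ 2)
      ⟪x, x⟫ := by
    have h := hu.div hv (by rw [hsq]; exact ne_of_gt hr)
    simpa [hsq, Pi.div_def] using h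
  have h := HasDerivAt.comp_hasFDerivAt (f := fun z : E => ⟪z, z⟫) x hψ (aux_hq x)
  have hfun : (fun z : E => -Real.sin ‖z‖ / ‖z‖)
      = fun z : E => -Real.sin (Real.sqrt ⟪z, z⟫) / Real.sqrt ⟪z, z⟫ := by
    funext z
    rw [real_inner_self_eq_norm_sq, Real.sqrt_sq (norm_nonneg z)]
  rw [hfun]
  exact h

end aux

lemma aux_trace_smulRight {F : Type*} [AddCommGroup F] [Module ℝ F]
    [Module.Free ℝ F] [Module.Finite ℝ F] (ℓ : F →ₗ[ℝ] ℝ) (v : F) :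
    LinearMap.trace ℝ F (ℓ.smulRight v) = ℓ v := by
  have h : ℓ.smulRight v = dualTensorHom ℝ F F (ℓ ⊗ₜ v) := by
    ext w; simp
  rw [h, LinearMap.trace_eq_contract_apply, contractLeft_apply]


/-- The explicit formula from Example 2.6 for the Laplacian of `f(x) = cos ‖x‖` on the
annulus `iπ < ‖x‖ < (i+1)π`, expressing `Δf` as a function of `f`. -/
theorem statement8 (i : ℕ) (x : EuclideanSpace ℝ (Fin 2))
    (h1 : (i : ℝ) * Real.pi < ‖x‖) (h2 : ‖x‖ < ((i : ℝ) + 1) * Real.pi) :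
    laplacian (fun y : EuclideanSpace ℝ (Fin 2) => Real.cos ‖y‖) x =
      -Real.cos ‖x‖ -
        (-1 : ℝ) ^ i * Real.sqrt (1 - (Real.cos ‖x‖) ^ 2) /
          ((i : ℝ) * Real.pi + Real.arccos ((-1 : ℝ) ^ i * Real.cos ‖x‖)) := by
  have hπ : (0:ℝ) ≤ (i : ℝ) * Real.pi := by positivity
  have hr : 0 < ‖x‖ := lt_of_le_of_lt hπ h1
  have hx : x ≠ 0 := norm_pos_iff.mp hr
  set c' : ℝ := ((-Real.cos ‖x‖ * (1 / (2 * ‖x‖))) * ‖x‖ - -Real.sin ‖x‖ * (1 / (2 * ‖x‖)))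
      / ‖x‖ ^ 2 with hc'def
  have hG : HasFDerivAt (fun y : EuclideanSpace ℝ (Fin 2) => (-Real.sin ‖y‖ / ‖y‖) • y)
      ((-Real.sin ‖x‖ / ‖x‖) • ContinuousLinearMap.id ℝ (EuclideanSpace ℝ (Fin 2))
        + (c' • ((2:ℝ) • innerSL ℝ x)).smulRight x) x :=
    (aux_c hx).smul (hasFDerivAt_id x)
  have heq : gradient (fun y : EuclideanSpace ℝ (Fin 2) => Real.cos ‖y‖)
      =ᶠ[nhds x] (fun y : EuclideanSpace ℝ (Fin 2) => (-Real.sin ‖y‖ / ‖y‖) • y) := by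
    filter_upwards [IsOpen.mem_nhds isOpen_compl_singleton hx] with y hy
    exact HasGradientAt.gradient (aux_grad hy)
  have hfd : fderiv ℝ (gradient (fun y : EuclideanSpace ℝ (Fin 2) => Real.cos ‖y‖)) x
      = (-Real.sin ‖x‖ / ‖x‖) • ContinuousLinearMap.id ℝ (EuclideanSpace ℝ (Fin 2))
        + (c' • ((2:ℝ) • innerSL ℝ x)).smulRight x := by
    rw [heq.fderiv_eq, hG.fderiv]
  have hcoe : (((-Real.sin ‖x‖ / ‖x‖) • ContinuousLinearMap.id ℝ (EuclideanSpace ℝ (Fin 2))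
        + (c' • ((2:ℝ) • innerSL ℝ x)).smulRight x : EuclideanSpace ℝ (Fin 2) →L[ℝ] (EuclideanSpace ℝ (Fin 2))) : EuclideanSpace ℝ (Fin 2) →ₗ[ℝ] (EuclideanSpace ℝ (Fin 2)))
      = (-Real.sin ‖x‖ / ‖x‖) • (LinearMap.id : EuclideanSpace ℝ (Fin 2) →ₗ[ℝ] (EuclideanSpace ℝ (Fin 2)))
        + ((c' • ((2:ℝ) • innerSL ℝ x) : EuclideanSpace ℝ (Fin 2) →L[ℝ] ℝ) : EuclideanSpace ℝ (Fin 2) →ₗ[ℝ] ℝ).smulRight x := by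
    apply LinearMap.ext
    intro v
    rfl
  have htr : laplacian (fun y : EuclideanSpace ℝ (Fin 2) => Real.cos ‖y‖) x
      = (-Real.sin ‖x‖ / ‖x‖) * 2 + c' * (2 * ‖x‖ ^ 2) := by
    have happ : (((c' • ((2:ℝ) • innerSL ℝ x) : EuclideanSpace ℝ (Fin 2) →L[ℝ] ℝ)
        : EuclideanSpace ℝ (Fin 2) →ₗ[ℝ] ℝ)) x = c' * (2 * ⟪x, x⟫) := rfl
    rw [laplacian, hfd, hcoe, map_add, map_smul, LinearMap.trace_id,
      aux_trace_smulRight, happ, real_inner_self_eq_norm_sq]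
    have hfin : (Module.finrank ℝ (EuclideanSpace ℝ (Fin 2)) : ℝ) = 2 := by
      rw [finrank_euclideanSpace_fin]; norm_num
    rw [hfin, smul_eq_mul]
  rw [htr]
  -- trig arithmetic
  set t : ℝ := ‖x‖ - (i:ℝ) * Real.pi with htdef
  have ht0 : 0 < t := sub_pos.mpr h1
  have htπ : t < Real.pi := by
    have h : ((i:ℝ) + 1) * Real.pi = (i:ℝ) * Real.pi + Real.pi := by ring
    rw [h] at h2
    simp only [htdef]
    linarith
  have hcos : Real.cos t = (-1:ℝ) ^ i * Real.cos ‖x‖ := Real.cos_sub_nat_mul_pi ‖x‖ i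
  have hsin : Real.sin t = (-1:ℝ) ^ i * Real.sin ‖x‖ := Real.sin_sub_nat_mul_pi ‖x‖ i
  have hsint : 0 < Real.sin t := Real.sin_pos_of_pos_of_lt_pi ht0 htπ
  have harc : Real.arccos ((-1:ℝ) ^ i * Real.cos ‖x‖) = t := by
    rw [← hcos, Real.arccos_cos ht0.le htπ.le]
  have hneg : ((-1:ℝ) ^ i) * ((-1:ℝ) ^ i) = 1 := by
    rw [← mul_pow]; norm_num
  have hsinr : Real.sin ‖x‖ = (-1:ℝ) ^ i * Real.sin t := by
    rw [hsin, ← mul_assoc, hneg, one_mul]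
  have hsqrt : Real.sqrt (1 - Real.cos ‖x‖ ^ 2) = Real.sin t := by
    have h1c : 1 - Real.cos ‖x‖ ^ 2 = Real.sin ‖x‖ ^ 2 := by
      have := Real.sin_sq_add_cos_sq ‖x‖; linarith
    rw [h1c, Real.sqrt_sq_eq_abs, ← abs_of_pos hsint, hsin, abs_mul, abs_pow,
      abs_neg, abs_one, one_pow, one_mul]
  have hden : (i:ℝ) * Real.pi + t = ‖x‖ := by simp [htdef]
  rw [harc, hsqrt, hden, ← hsinr]
  have hne : ‖x‖ ≠ 0 := ne_of_gt hr
  rw [hc'def]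
  field_simp
  ring
end

section
/- Let f : ℝ² → ℝ be defined by f(x) = cos(‖x‖). Then there exists no function G : ℝ → ℝ such that Δf(x) = G(f(x)) for all x ∈ ℝ²; that is, f is not a globally isoparametric function on the Euclidean plane. -/
open Set Metric

local notation "E" => EuclideanSpace ℝ (Fin 2)

lemma trace_smulRight'_s9 (L : E →L[ℝ] ℝ) (v : E) :
    LinearMap.trace ℝ E ((L.smulRight v : E →L[ℝ] E) : E →ₗ[ℝ] E) = L v := by
  classical
  rw [LinearMap.trace_eq_matrix_trace ℝ (PiLp.basisFun 2 ℝ (Fin 2)), Matrix.trace]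
  have hv : ∑ i, v i • (PiLp.basisFun 2 ℝ (Fin 2)) i = v := by
    simpa using (PiLp.basisFun 2 ℝ (Fin 2)).sum_repr v
  calc ∑ i, Matrix.diag (LinearMap.toMatrix (PiLp.basisFun 2 ℝ (Fin 2))
        (PiLp.basisFun 2 ℝ (Fin 2)) ((L.smulRight v : E →L[ℝ] E) : E →ₗ[ℝ] E)) i
      = ∑ i, L ((PiLp.basisFun 2 ℝ (Fin 2)) i) * v i := by
        refine Finset.sum_congr rfl fun i _ => ?_
        simp [Matrix.diag, LinearMap.toMatrix_apply, PiLp.basisFun_repr]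
    _ = L v := by
        rw [← hv, map_sum]
        simp [mul_comm]

lemma hasFDerivAt_norm' (x : E) (hx : x ≠ 0) :
    HasFDerivAt (fun y : E => ‖y‖) (‖x‖⁻¹ • innerSL ℝ x) x := by
  have h1 : HasFDerivAt (fun y : E => @inner ℝ _ _ y y) ((2:ℝ) • innerSL ℝ x) x := by
    have := (hasFDerivAt_id (𝕜 := ℝ) x).inner ℝ (hasFDerivAt_id x)
    refine this.congr_fderiv ?_
    ext v
    simp only [two_smul, ContinuousLinearMap.add_apply, innerSL_apply_apply,
      ContinuousLinearMap.coe_comp', Function.comp_apply, ContinuousLinearMap.prod_apply,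
      ContinuousLinearMap.coe_id', id_eq, fderivInnerCLM_apply]
    rw [real_inner_comm]
  have hpos : (0:ℝ) < @inner ℝ _ _ x x := by
    rw [real_inner_self_eq_norm_sq]
    exact pow_pos (norm_pos_iff.2 hx) 2
  have h2 : HasDerivAt Real.sqrt (1 / (2 * Real.sqrt (@inner ℝ _ _ x x)))
      (@inner ℝ _ _ x x) := Real.hasDerivAt_sqrt hpos.ne'
  have h3 : HasFDerivAt (fun y : E => Real.sqrt (@inner ℝ _ _ y y))
      ((1 / (2 * Real.sqrt (@inner ℝ _ _ x x))) • ((2:ℝ) • innerSL ℝ x)) x :=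
    h2.comp_hasFDerivAt_of_eq x h1 rfl
  have hs : Real.sqrt (@inner ℝ _ _ x x) = ‖x‖ := by
    rw [real_inner_self_eq_norm_sq]; exact Real.sqrt_sq (norm_nonneg x)
  have heq : (fun y : E => Real.sqrt (@inner ℝ _ _ y y)) = fun y : E => ‖y‖ := by
    funext y; rw [real_inner_self_eq_norm_sq]; exact Real.sqrt_sq (norm_nonneg y)
  rw [heq] at h3
  convert h3 using 1
  rw [hs]
  ext v
  have hn : ‖x‖ ≠ 0 := norm_ne_zero_iff.2 hx
  simp only [ContinuousLinearMap.smul_apply, innerSL_apply_apply, smul_eq_mul]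
  have hn2 : Real.sqrt (@inner ℝ _ _ x x) = ‖x‖ := hs
  field_simp

lemma hasGradientAt_f (x : E) (hx : x ≠ 0) :
    HasGradientAt (fun y : E => Real.cos ‖y‖) ((-Real.sin ‖x‖ * ‖x‖⁻¹) • x) x := by
  have h1 := hasFDerivAt_norm' x hx
  have h2 : HasDerivAt Real.cos (-Real.sin ‖x‖) ‖x‖ := Real.hasDerivAt_cos ‖x‖
  have h3 : HasFDerivAt (fun y : E => Real.cos ‖y‖)
      ((-Real.sin ‖x‖) • (‖x‖⁻¹ • innerSL ℝ x)) x := h2.comp_hasFDerivAt_of_eq x h1 rfl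
  rw [hasGradientAt_iff_hasFDerivAt]
  refine h3.congr_fderiv ?_
  ext v
  simp only [InnerProductSpace.toDual_apply_apply, ContinuousLinearMap.smul_apply, innerSL_apply_apply,
    smul_eq_mul, real_inner_smul_left]
  ring

lemma hasFDerivAt_F (x : E) (hx : x ≠ 0) :
    HasFDerivAt (fun y : E => (-Real.sin ‖y‖ * ‖y‖⁻¹) • y)
      ((-Real.sin ‖x‖ * ‖x‖⁻¹) • ContinuousLinearMap.id ℝ E +
        (((-Real.cos ‖x‖ * ‖x‖⁻¹ + -Real.sin ‖x‖ * -(‖x‖ ^ 2)⁻¹) * ‖x‖⁻¹) •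
          innerSL ℝ x).smulRight x) x := by
  have hr : ‖x‖ ≠ 0 := norm_ne_zero_iff.2 hx
  have hψ : HasDerivAt (fun t : ℝ => -Real.sin t * t⁻¹)
      (-Real.cos ‖x‖ * ‖x‖⁻¹ + -Real.sin ‖x‖ * -(‖x‖ ^ 2)⁻¹) ‖x‖ := by
    exact ((Real.hasDerivAt_sin ‖x‖).neg.mul (hasDerivAt_inv hr))
  have hc : HasFDerivAt (fun y : E => -Real.sin ‖y‖ * ‖y‖⁻¹)
      ((-Real.cos ‖x‖ * ‖x‖⁻¹ + -Real.sin ‖x‖ * -(‖x‖ ^ 2)⁻¹) • (‖x‖⁻¹ • innerSL ℝ x)) x :=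
    hψ.comp_hasFDerivAt_of_eq x (hasFDerivAt_norm' x hx) rfl
  have := hc.smul (hasFDerivAt_id x)
  refine this.congr_fderiv ?_
  ext v
  simp [smul_smul, mul_comm, mul_assoc, mul_left_comm]

lemma lap_eq (x : E) (hx : x ≠ 0) :
    laplacian (fun y : E => Real.cos ‖y‖) x = -Real.cos ‖x‖ - Real.sin ‖x‖ / ‖x‖ := by
  have hr : ‖x‖ ≠ 0 := norm_ne_zero_iff.2 hx
  have hev : gradient (fun y : E => Real.cos ‖y‖) =ᶠ[nhds x]
      fun y : E => (-Real.sin ‖y‖ * ‖y‖⁻¹) • y := by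
    filter_upwards [IsOpen.mem_nhds isOpen_compl_singleton hx] with y hy
    exact (hasGradientAt_f y hy).gradient
  have hfd : fderiv ℝ (gradient (fun y : E => Real.cos ‖y‖)) x =
      ((-Real.sin ‖x‖ * ‖x‖⁻¹) • ContinuousLinearMap.id ℝ E +
        (((-Real.cos ‖x‖ * ‖x‖⁻¹ + -Real.sin ‖x‖ * -(‖x‖ ^ 2)⁻¹) * ‖x‖⁻¹) •
          innerSL ℝ x).smulRight x) := by
    rw [hev.fderiv_eq]
    exact (hasFDerivAt_F x hx).fderiv
  rw [laplacian, hfd]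
  have h1 : ((((-Real.sin ‖x‖ * ‖x‖⁻¹) • ContinuousLinearMap.id ℝ E +
        (((-Real.cos ‖x‖ * ‖x‖⁻¹ + -Real.sin ‖x‖ * -(‖x‖ ^ 2)⁻¹) * ‖x‖⁻¹) •
          innerSL ℝ x).smulRight x) : E →L[ℝ] E) : E →ₗ[ℝ] E) =
      ((((-Real.sin ‖x‖ * ‖x‖⁻¹) • ContinuousLinearMap.id ℝ E : E →L[ℝ] E)) : E →ₗ[ℝ] E) +
      ((((((-Real.cos ‖x‖ * ‖x‖⁻¹ + -Real.sin ‖x‖ * -(‖x‖ ^ 2)⁻¹) * ‖x‖⁻¹) •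
          innerSL ℝ x).smulRight x : E →L[ℝ] E)) : E →ₗ[ℝ] E) := rfl
  rw [h1, map_add, trace_smulRight'_s9]
  have h2 : ((((-Real.sin ‖x‖ * ‖x‖⁻¹) • ContinuousLinearMap.id ℝ E : E →L[ℝ] E)) : E →ₗ[ℝ] E) =
      (-Real.sin ‖x‖ * ‖x‖⁻¹) • (LinearMap.id : E →ₗ[ℝ] E) := rfl
  rw [h2, map_smul, LinearMap.trace_id]
  have h3 : (Module.finrank ℝ E : ℝ) = 2 := by rw [finrank_euclideanSpace_fin]; norm_num
  have h4 : ((((-Real.cos ‖x‖ * ‖x‖⁻¹ + -Real.sin ‖x‖ * -(‖x‖ ^ 2)⁻¹) * ‖x‖⁻¹) •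
      innerSL ℝ x) : E →L[ℝ] ℝ) x =
      ((-Real.cos ‖x‖ * ‖x‖⁻¹ + -Real.sin ‖x‖ * -(‖x‖ ^ 2)⁻¹) * ‖x‖⁻¹) * ‖x‖ ^ 2 := by
    simp only [ContinuousLinearMap.smul_apply, innerSL_apply_apply, smul_eq_mul]
    rw [real_inner_self_eq_norm_sq]
  rw [h4, h3]
  field_simp
  rw [smul_eq_mul]
  linear_combination (-2 * Real.sin ‖x‖) * mul_inv_cancel₀ hr

/-- The negative claim in Example 2.6: for `f(x) = cos ‖x‖` on the Euclidean plane, the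
Laplacian `Δf` cannot be globally expressed as a function of `f`. -/
theorem statement9 :
    ¬ ∃ G : ℝ → ℝ, ∀ x : EuclideanSpace ℝ (Fin 2),
      laplacian (fun y : EuclideanSpace ℝ (Fin 2) => Real.cos ‖y‖) x =
        G (Real.cos ‖x‖) := by
  rintro ⟨G, hG⟩
  have hπ := Real.pi_pos
  set x1 : E := EuclideanSpace.single 0 (Real.pi / 2) with hx1def
  set x2 : E := EuclideanSpace.single 0 (Real.pi + Real.pi / 2) with hx2def
  have hn1 : ‖x1‖ = Real.pi / 2 := by
    rw [hx1def, EuclideanSpace.norm_single]; exact abs_of_pos (by linarith)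
  have hn2 : ‖x2‖ = Real.pi + Real.pi / 2 := by
    rw [hx2def, EuclideanSpace.norm_single]; exact abs_of_pos (by linarith)
  have hx1 : x1 ≠ 0 := by
    refine norm_ne_zero_iff.1 ?_
    rw [hn1]; positivity
  have hx2 : x2 ≠ 0 := by
    refine norm_ne_zero_iff.1 ?_
    rw [hn2]; positivity
  have e1 := hG x1
  have e2 := hG x2
  rw [lap_eq x1 hx1, hn1] at e1
  rw [lap_eq x2 hx2, hn2] at e2
  have hc2 : Real.cos (Real.pi + Real.pi / 2) = 0 := by
    rw [Real.cos_add]; simp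
  have hs2 : Real.sin (Real.pi + Real.pi / 2) = -1 := by
    rw [Real.sin_add]; simp
  rw [Real.cos_pi_div_two, Real.sin_pi_div_two] at e1
  rw [hc2, hs2] at e2
  rw [← e1] at e2
  have h1 : (0:ℝ) < 1 / (Real.pi / 2) := by positivity
  have h2 : (0:ℝ) < 1 / (Real.pi + Real.pi / 2) := by positivity
  have hne1 : Real.pi + Real.pi / 2 ≠ 0 := by positivity
  have hne2 : Real.pi / 2 ≠ 0 := by positivity
  field_simp at e2
  nlinarith [sq_nonneg Real.pi]
end

section
/- Let F(x,y) = (2 − x² − y²)/2 and define f : ℝ³ → ℝ by f(x,y,z) = (x² + y² − 2)/x on the region Ω = {(x,y,z) : x² + y² < 2, x > 0}. Then for every point of Ω: F² · (f_x² + f_y²) + f_z² = f² (f² + 8)/4 and F² · (f_xx + f_yy) + f_zz = f³/2, where subscripts denote partial derivatives. In particular both expressions are functions of f alone. -/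
lemma derivX (y : ℝ) {x : ℝ} (hx : x ≠ 0) :
    deriv (fun t : ℝ => (t ^ 2 + y ^ 2 - 2) / t) x
      = (x ^ 2 - y ^ 2 + 2) / x ^ 2 := by
  have h1 : HasDerivAt (fun t : ℝ => t ^ 2 + y ^ 2 - 2) (2 * x) x := by
    simpa using ((hasDerivAt_pow 2 x).add_const (y ^ 2)).sub_const 2
  have h : HasDerivAt (fun t : ℝ => (t ^ 2 + y ^ 2 - 2) / t)
      ((2 * x * x - (x ^ 2 + y ^ 2 - 2) * 1) / x ^ 2) x := h1.div (hasDerivAt_id' x) hx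
  rw [h.deriv]
  field_simp
  ring

/-- The computation in the Example of Section 4: on `ℍ²×ℝ` with metric
`ds² = (dx²+dy²)/F² + dz²`, `F = (2−x²−y²)/2`, the function `f = (x²+y²−2)/x` (on the region
`x²+y² < 2`, `x > 0`) satisfies `(∇f)²_g = F²(f_x²+f_y²)+f_z² = f²(f²+8)/4` and
`Δ_g f = F²(f_xx+f_yy)+f_zz = f³/2`; in particular both are functions of `f` alone. -/
theorem statement14 (F : ℝ → ℝ → ℝ) (f : ℝ → ℝ → ℝ → ℝ)
    (hF : ∀ x y, F x y = (2 - x ^ 2 - y ^ 2) / 2)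
    (hf : ∀ x y z, f x y z = (x ^ 2 + y ^ 2 - 2) / x)
    (x y z : ℝ) (hxy : x ^ 2 + y ^ 2 < 2) (hx : 0 < x) :
    F x y ^ 2 * ((deriv (fun t => f t y z) x) ^ 2 + (deriv (fun t => f x t z) y) ^ 2) +
        (deriv (fun t => f x y t) z) ^ 2 =
      f x y z ^ 2 * (f x y z ^ 2 + 8) / 4 ∧
    F x y ^ 2 * (deriv (deriv (fun t => f t y z)) x + deriv (deriv (fun t => f x t z)) y) +
        deriv (deriv (fun t => f x y t)) z =
      f x y z ^ 3 / 2 := by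
  have hx0 : x ≠ 0 := hx.ne'
  have e1 : (fun t => f t y z) = fun t : ℝ => (t ^ 2 + y ^ 2 - 2) / t :=
    funext fun t => hf t y z
  have e2 : (fun t => f x t z) = fun t : ℝ => (x ^ 2 + t ^ 2 - 2) / x :=
    funext fun t => hf x t z
  have e3 : (fun t => f x y t) = fun _ : ℝ => (x ^ 2 + y ^ 2 - 2) / x :=
    funext fun t => hf x y t
  -- first derivatives
  have dX : deriv (fun t => f t y z) x = (x ^ 2 - y ^ 2 + 2) / x ^ 2 := by
    rw [e1]; exact derivX y hx0
  have hYd : ∀ t : ℝ, HasDerivAt (fun t : ℝ => (x ^ 2 + t ^ 2 - 2) / x) (2 * t / x) t := by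
    intro t
    have h1 : HasDerivAt (fun t : ℝ => x ^ 2 + t ^ 2 - 2) (2 * t) t := by
      simpa using (((hasDerivAt_pow 2 t).const_add (x ^ 2)).sub_const 2)
    exact h1.div_const x
  have dY : deriv (fun t => f x t z) y = 2 * y / x := by
    rw [e2]; exact (hYd y).deriv
  have dZ : deriv (fun t => f x y t) z = 0 := by
    rw [e3]; exact deriv_const _ _
  -- second derivatives
  have dXX : deriv (deriv (fun t => f t y z)) x = 2 * (y ^ 2 - 2) / x ^ 3 := by
    rw [e1]
    have hev : deriv (fun t : ℝ => (t ^ 2 + y ^ 2 - 2) / t)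
        =ᶠ[nhds x] fun t : ℝ => (t ^ 2 - y ^ 2 + 2) / t ^ 2 := by
      filter_upwards [eventually_ne_nhds hx0] with t ht
      exact derivX y ht
    rw [hev.deriv_eq]
    have h1 : HasDerivAt (fun t : ℝ => t ^ 2 - y ^ 2 + 2) (2 * x) x := by
      simpa using ((hasDerivAt_pow 2 x).sub_const (y ^ 2)).add_const 2
    have h2 : HasDerivAt (fun t : ℝ => t ^ 2) (2 * x) x := by
      simpa using hasDerivAt_pow 2 x
    have h : HasDerivAt (fun t : ℝ => (t ^ 2 - y ^ 2 + 2) / t ^ 2)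
        ((2 * x * x ^ 2 - (x ^ 2 - y ^ 2 + 2) * (2 * x)) / (x ^ 2) ^ 2) x :=
      h1.div h2 (pow_ne_zero 2 hx0)
    rw [h.deriv]
    field_simp
    ring
  have dYY : deriv (deriv (fun t => f x t z)) y = 2 / x := by
    rw [e2]
    have h0 : deriv (fun t : ℝ => (x ^ 2 + t ^ 2 - 2) / x) = fun t : ℝ => 2 * t / x :=
      funext fun t => (hYd t).deriv
    rw [h0]
    have h : HasDerivAt (fun t : ℝ => 2 * t / x) (2 / x) y := by
      simpa using (((hasDerivAt_id y).const_mul 2).div_const x)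
    exact h.deriv
  have dZZ : deriv (deriv (fun t => f x y t)) z = 0 := by
    rw [e3]
    have h0 : deriv (fun _ : ℝ => (x ^ 2 + y ^ 2 - 2) / x) = fun _ : ℝ => (0 : ℝ) :=
      funext fun t => deriv_const _ _
    rw [h0]; exact deriv_const _ _
  rw [dX, dY, dZ, dXX, dYY, dZZ, hF, hf]
  constructor <;> (field_simp; ring)
end

section
/- Let φ : ℝ² → ℝ be defined by φ(x,y) = (y − x²)/2. Then for every nonempty open set U ⊆ ℝ² there is no function F : ℝ → ℝ such that ‖∇φ(p)‖² = F(φ(p)) for all p ∈ U. In particular, φ is not an equilibrium function of the Euclidean plane (‖∇φ‖² is not constant on the connected components of the level sets of φ). -/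
open Set Metric

noncomputable def gvec (p : EuclideanSpace ℝ (Fin 2)) : EuclideanSpace ℝ (Fin 2) :=
  (EuclideanSpace.equiv (Fin 2) ℝ).symm ![-(p 0), 1/2]

lemma grad_eq (p : EuclideanSpace ℝ (Fin 2)) :
    HasGradientAt (fun q : EuclideanSpace ℝ (Fin 2) => (q 1 - (q 0) ^ 2) / 2) (gvec p) p := by
  rw [hasGradientAt_iff_hasFDerivAt]
  have h0 := (EuclideanSpace.proj (0 : Fin 2) (𝕜 := ℝ)).hasFDerivAt (x := p)
  have h1 := (EuclideanSpace.proj (1 : Fin 2) (𝕜 := ℝ)).hasFDerivAt (x := p)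
  have h := ((h1.sub (h0.mul h0)).const_mul (2⁻¹ : ℝ))
  simp only [pow_two, div_eq_inv_mul]
  convert h using 1
  · rfl
  · funext q; rfl
  ext v
  simp [gvec, InnerProductSpace.toDual_apply_apply, PiLp.inner_apply, Fin.sum_univ_two,
    RCLike.inner_apply]
  ring

lemma norm_gvec (p : EuclideanSpace ℝ (Fin 2)) : ‖gvec p‖ ^ 2 = (p 0) ^ 2 + 1/4 := by
  rw [← real_inner_self_eq_norm_sq]
  simp [gvec, EuclideanSpace.norm_sq_eq, Fin.sum_univ_two]
  ring

noncomputable def curve (a : ℝ) (t : ℝ) : EuclideanSpace ℝ (Fin 2) :=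
  (EuclideanSpace.equiv (Fin 2) ℝ).symm ![t, t ^ 2 + a]

lemma curve_apply0 (a t : ℝ) : curve a t 0 = t := rfl
lemma curve_apply1 (a t : ℝ) : curve a t 1 = t ^ 2 + a := rfl

lemma curve_cont (a : ℝ) : Continuous (curve a) := by
  apply (EuclideanSpace.equiv (Fin 2) ℝ).symm.continuous.comp
  refine continuous_pi fun i => ?_
  fin_cases i <;> simp <;> fun_prop

/-- The conformal factor `φ(x,y) = (y − x²)/2` of the metric `e^{y−x²}δ` from Section 3 of
the paper is not an equilibrium function of the Euclidean plane: on no nonempty open set is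
`‖∇φ‖²` a function of `φ`, and `‖∇φ‖²` is not constant on the fibre components of `φ`. -/
theorem statement16 (φ : EuclideanSpace ℝ (Fin 2) → ℝ)
    (hφ : ∀ p : EuclideanSpace ℝ (Fin 2), φ p = (p 1 - (p 0) ^ 2) / 2) :
    (∀ U : Set (EuclideanSpace ℝ (Fin 2)), IsOpen U → U.Nonempty →
      ¬ ∃ F : ℝ → ℝ, ∀ p ∈ U, ‖gradient φ p‖ ^ 2 = F (φ p)) ∧
    ¬ ConstOnFibreComponents φ (fun p => ‖gradient φ p‖ ^ 2) Set.univ := by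
  have hφ' : φ = fun q : EuclideanSpace ℝ (Fin 2) => (q 1 - (q 0) ^ 2) / 2 := funext hφ
  subst hφ'
  have hgrad : ∀ p, gradient (fun q : EuclideanSpace ℝ (Fin 2) => (q 1 - (q 0) ^ 2) / 2) p
      = gvec p := fun p => (grad_eq p).gradient
  have hnorm : ∀ p, ‖gradient (fun q : EuclideanSpace ℝ (Fin 2) => (q 1 - (q 0) ^ 2) / 2) p‖ ^ 2
      = (p 0) ^ 2 + 1/4 := fun p => by rw [hgrad]; exact norm_gvec p
  constructor
  · rintro U hU ⟨p, hp⟩ ⟨F, hF⟩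
    set a : ℝ := p 1 - (p 0) ^ 2 with ha
    have hc : ∀ t, (fun q : EuclideanSpace ℝ (Fin 2) => (q 1 - (q 0) ^ 2) / 2) (curve a t)
        = (fun q : EuclideanSpace ℝ (Fin 2) => (q 1 - (q 0) ^ 2) / 2) p := by
      intro t
      simp [curve_apply0, curve_apply1, ha]
    have hcp : curve a (p 0) = p := by
      refine PiLp.ext fun i => ?_
      fin_cases i
      · rfl
      · show curve a (p 0) 1 = p 1
        rw [curve_apply1]; ring
    -- the preimage of U under the curve is open and contains p 0
    have hpre : IsOpen ((curve a) ⁻¹' U) := hU.preimage (curve_cont a)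
    have hmem : p 0 ∈ (curve a) ⁻¹' U := by simp [mem_preimage, hcp, hp]
    obtain ⟨δ, hδ, hball⟩ := Metric.isOpen_iff.1 hpre _ hmem
    have h1 : curve a (p 0 + δ/2) ∈ U := hball (by
      rw [mem_ball, Real.dist_eq, show p 0 + δ/2 - p 0 = δ/2 by ring,
        abs_of_nonneg (by linarith)]; linarith)
    have h2 : curve a (p 0 - δ/2) ∈ U := hball (by
      rw [mem_ball, Real.dist_eq, show p 0 - δ/2 - p 0 = -(δ/2) by ring, abs_neg,
        abs_of_nonneg (by linarith)]; linarith)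
    have e0 := hF p hp
    have e1 := hF _ h1
    have e2 := hF _ h2
    rw [hnorm] at e0
    rw [hnorm, hc] at e1 e2
    rw [curve_apply0] at e1 e2
    nlinarith [e0, e1, e2]
  · intro h
    have h0 := h 0 (mem_univ _) (curve 0 1) ?_
    · simp only [hnorm] at h0
      have : (0 : EuclideanSpace ℝ (Fin 2)) 0 = 0 := rfl
      rw [curve_apply0, this] at h0
      norm_num at h0
    · have hsub : range (curve 0) ⊆ {z : EuclideanSpace ℝ (Fin 2) | z ∈ (univ : Set _) ∧
          (fun q : EuclideanSpace ℝ (Fin 2) => (q 1 - (q 0) ^ 2) / 2) z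
            = (fun q : EuclideanSpace ℝ (Fin 2) => (q 1 - (q 0) ^ 2) / 2) 0} := by
        rintro z ⟨t, rfl⟩
        refine ⟨mem_univ _, ?_⟩
        have : (0 : EuclideanSpace ℝ (Fin 2)) 0 = 0 := rfl
        have h1 : (0 : EuclideanSpace ℝ (Fin 2)) 1 = 0 := rfl
        simp [curve_apply0, curve_apply1, this, h1]
      have hconn : IsPreconnected (range (curve 0)) :=
        isPreconnected_range (curve_cont 0)
      have h0mem : (0 : EuclideanSpace ℝ (Fin 2)) ∈ range (curve 0) := by
        refine ⟨0, PiLp.ext fun i => ?_⟩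
        fin_cases i
        · rfl
        · show curve 0 0 1 = 0; rw [curve_apply1]; norm_num
      exact hconn.subset_connectedComponentIn h0mem hsub ⟨1, rfl⟩
end
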